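/- Let f be differentiable with L-Lipschitz gradient and bounded below by f*. Let η = 1/(2L), q ≥ 1, and suppose iterates x_{k+1} = x_k - η v_k satisfy, within each epoch of length q starting at index (n_k-1)q with v_{(n_k-1)q} = ∇f(x_{(n_k-1)q}), the variance recursion ‖v_k - ∇f(x_k)‖² ≤ (L²/q)‖x_k - x_{k-1}‖² + ‖v_{k-1} - ∇f(x_{k-1})‖². Then ∑_{k=0}^{K-1} ‖v_k‖² ≤ 16L(f(x_0) - f*). -/

import Mathlib

open InnerProductSpace Finset

local notation "⟪" x ", " y "⟫" => @inner ℝ _ _ x y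

lemma descent_lemma {E : Type*} [NormedAddCommGroup E] [InnerProductSpace ℝ E]
    [CompleteSpace E]
    (f : E → ℝ) (L : ℝ) (hdiff : Differentiable ℝ f)
    (hlip : ∀ x y, ‖gradient f x - gradient f y‖ ≤ L * ‖x - y‖) (x y : E) :
    f y ≤ f x + ⟪gradient f x, y - x⟫ + L / 2 * ‖y - x‖ ^ 2 := by
  set u := y - x with hu
  have hfd : ∀ z, HasFDerivAt f (toDual ℝ E (gradient f z)) z := fun z =>
    ((hdiff z).hasGradientAt).hasFDerivAt
  have hline : ∀ t : ℝ, HasDerivAt (fun t : ℝ => x + t • u) u t := by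
    intro t
    simpa using ((hasDerivAt_id t).smul_const u).const_add x
  have hg : ∀ t : ℝ, HasDerivAt (fun t : ℝ => f (x + t • u))
      ⟪gradient f (x + t • u), u⟫ t := by
    intro t
    have := (hfd (x + t • u)).comp_hasDerivAt t (hline t)
    simp only [toDual_apply_apply] at this
    exact this
  set c : ℝ := ⟪gradient f x, u⟫ with hc
  set φ : ℝ → ℝ := fun t => f (x + t • u) - f x - t * c - L * ‖u‖ ^ 2 / 2 * t ^ 2 with hφ
  have hφ' : ∀ t : ℝ, HasDerivAt φ
      (⟪gradient f (x + t • u), u⟫ - c - L * ‖u‖ ^ 2 / 2 * (2 * t)) t := by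
    intro t
    have h1 : HasDerivAt (fun t : ℝ => t * c) c t := by
      simpa using (hasDerivAt_id t).mul_const c
    have h2 : HasDerivAt (fun t : ℝ => L * ‖u‖ ^ 2 / 2 * t ^ 2)
        (L * ‖u‖ ^ 2 / 2 * (2 * t)) t := by
      simpa [pow_one, mul_comm] using (hasDerivAt_pow 2 t).const_mul (L * ‖u‖ ^ 2 / 2)
    exact (((hg t).sub_const (f x)).sub h1).sub h2
  have hanti : AntitoneOn φ (Set.Icc (0:ℝ) 1) := by
    apply antitoneOn_of_deriv_nonpos (convex_Icc 0 1)
    · exact (Differentiable.continuous fun t => (hφ' t).differentiableAt).continuousOn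
    · intro t ht
      exact ((hφ' t).differentiableAt).differentiableWithinAt
    · intro t ht
      rw [interior_Icc] at ht
      rw [(hφ' t).deriv]
      have hnn : ⟪gradient f (x + t • u) - gradient f x, u⟫ ≤ L * t * ‖u‖ ^ 2 := by
        calc ⟪gradient f (x + t • u) - gradient f x, u⟫
            ≤ ‖gradient f (x + t • u) - gradient f x‖ * ‖u‖ := real_inner_le_norm _ _
          _ ≤ (L * ‖x + t • u - x‖) * ‖u‖ := by
              have := hlip (x + t • u) x
              have h0 : (0:ℝ) ≤ ‖u‖ := norm_nonneg _
              nlinarith [norm_nonneg (gradient f (x + t • u) - gradient f x)]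
          _ = L * t * ‖u‖ ^ 2 := by
              rw [add_sub_cancel_left, norm_smul]
              simp [abs_of_nonneg ht.1.le]
              ring
      rw [inner_sub_left] at hnn
      nlinarith
  have h01 : φ 1 ≤ φ 0 := hanti (Set.mem_Icc.mpr ⟨le_refl 0, zero_le_one⟩)
      (Set.mem_Icc.mpr ⟨zero_le_one, le_refl 1⟩) zero_le_one
  have h0 : φ 0 = 0 := by simp [hφ]
  have h1 : φ 1 = f y - f x - c - L * ‖u‖ ^ 2 / 2 := by
    simp [hφ, hu]
  rw [h0, h1] at h01
  have : L / 2 * ‖y - x‖ ^ 2 = L * ‖u‖ ^ 2 / 2 := by rw [hu]; ring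
  linarith [h01, this.ge]

lemma sum_boole_mul_le {K q : ℕ} (hq : 1 ≤ q) (a : ℕ → ℝ) (ha : ∀ j, 0 ≤ a j) :
    ∑ k ∈ range K, ∑ j ∈ Finset.Ico (q * (k / q)) k, a j ≤ q * ∑ k ∈ range K, a k := by
  have hsub : ∀ k ∈ range K, Finset.Ico (q * (k / q)) k ⊆ range K := by
    intro k hk j hj
    rw [Finset.mem_Ico] at hj
    rw [Finset.mem_range] at hk ⊢
    omega
  calc ∑ k ∈ range K, ∑ j ∈ Finset.Ico (q * (k / q)) k, a j
      = ∑ k ∈ range K, ∑ j ∈ range K,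
          if j ∈ Finset.Ico (q * (k / q)) k then a j else 0 := by
        apply Finset.sum_congr rfl
        intro k hk
        rw [Finset.sum_ite_mem, Finset.inter_eq_right.mpr (hsub k hk)]
    _ = ∑ j ∈ range K, ∑ k ∈ range K,
          if j ∈ Finset.Ico (q * (k / q)) k then a j else 0 := Finset.sum_comm
    _ ≤ ∑ j ∈ range K, q * a j := by
        apply Finset.sum_le_sum
        intro j hj
        rw [← Finset.sum_filter]
        rw [Finset.sum_const, nsmul_eq_mul]
        have hcard : ((range K).filter fun k => j ∈ Finset.Ico (q * (k / q)) k).card ≤ q := by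
          have hs : ((range K).filter fun k => j ∈ Finset.Ico (q * (k / q)) k)
              ⊆ Finset.Ioc j (j + q) := by
            intro k hk
            rw [Finset.mem_filter, Finset.mem_Ico] at hk
            rw [Finset.mem_Ioc]
            have h1 : k < q * (k / q) + q := by
              have := Nat.mod_lt k (by omega : 0 < q)
              have := Nat.div_add_mod k q
              omega
            omega
          calc _ ≤ (Finset.Ioc j (j + q)).card := Finset.card_le_card hs
            _ = q := by rw [Nat.card_Ioc]; omega
        calc (((range K).filter fun k => j ∈ Finset.Ico (q * (k / q)) k).card : ℝ) * a j
            ≤ (q : ℝ) * a j := by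
              apply mul_le_mul_of_nonneg_right _ (ha j)
              exact_mod_cast hcard
          _ = q * a j := rfl
    _ = q * ∑ k ∈ range K, a k := by rw [Finset.mul_sum]

set_option maxHeartbeats 1600000 in
theorem spiderboost_sum_estimator_bound {d : ℕ} (f : EuclideanSpace ℝ (Fin d) → ℝ)
    (L : ℝ) (hL : 0 < L) (hdiff : Differentiable ℝ f)
    (hlip : ∀ x y, ‖gradient f x - gradient f y‖ ≤ L * ‖x - y‖)
    (fstar : ℝ) (hlb : ∀ x, fstar ≤ f x)
    (q : ℕ) (hq : 1 ≤ q)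
    (x v : ℕ → EuclideanSpace ℝ (Fin d))
    (hupd : ∀ k, x (k + 1) = x k - (1 / (2 * L)) • v k)
    (hinit : ∀ k, k % q = 0 → v k = gradient f (x k))
    (hvar : ∀ k, k % q ≠ 0 → ‖v k - gradient f (x k)‖ ^ 2 ≤
      L ^ 2 / q * ‖x k - x (k - 1)‖ ^ 2 + ‖v (k - 1) - gradient f (x (k - 1))‖ ^ 2)
    (K : ℕ) :
    ∑ k ∈ Finset.range K, ‖v k‖ ^ 2 ≤ 16 * L * (f (x 0) - fstar) := by
  set η : ℝ := 1 / (2 * L) with hη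
  have hηpos : 0 < η := by positivity
  set e : ℕ → ℝ := fun k => ‖v k - gradient f (x k)‖ ^ 2 with he
  set a : ℕ → ℝ := fun k => ‖v k‖ ^ 2 with ha
  have hanneg : ∀ j, 0 ≤ a j := fun j => sq_nonneg _
  -- step displacement
  have hdisp : ∀ k, ‖x (k + 1) - x k‖ ^ 2 = η ^ 2 * a k := by
    intro k
    rw [hupd k]
    have : x k - η • v k - x k = -(η • v k) := by abel
    rw [this, norm_neg, norm_smul]
    simp [ha, abs_of_pos hηpos]
    ring
  -- per-step descent
  have hstep : ∀ k, 1 / (8 * L) * a k ≤ f (x k) - f (x (k + 1)) + 1 / (4 * L) * e k := by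
    intro k
    have hd := descent_lemma f L hdiff hlip (x k) (x (k + 1))
    have hyx : x (k + 1) - x k = -(η • v k) := by rw [hupd k]; abel
    rw [hyx] at hd
    have hip : ⟪gradient f (x k), -(η • v k)⟫
        = -η * ⟪gradient f (x k), v k⟫ := by
      rw [inner_neg_right, real_inner_smul_right]; ring
    have hns : ‖-(η • v k)‖ ^ 2 = η ^ 2 * a k := by
      rw [norm_neg, norm_smul]
      simp [ha, abs_of_pos hηpos]; ring
    rw [hip, hns] at hd
    have hpol : ‖gradient f (x k) - v k‖ ^ 2 = ‖gradient f (x k)‖ ^ 2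
        - 2 * ⟪gradient f (x k), v k⟫ + ‖v k‖ ^ 2 := norm_sub_sq_real _ _
    have hrev : e k = ‖gradient f (x k) - v k‖ ^ 2 := by
      rw [he]; simp only []; rw [norm_sub_rev]
    have hL' : L ≠ 0 := ne_of_gt hL
    set ip : ℝ := ⟪gradient f (x k), v k⟫ with hipd
    set g2 : ℝ := ‖gradient f (x k)‖ ^ 2 with hg2d
    have hg2 : (0:ℝ) ≤ g2 := sq_nonneg _
    have hηL2 : η ^ 2 = 1 / (4 * L ^ 2) := by rw [hη]; ring
    rw [hη] at hd
    rw [hηL2] at hd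
    have hc : L / 2 * (1 / (4 * L ^ 2) * a k) = 1 / (8 * L) * a k := by
      field_simp; ring
    rw [hc] at hd
    rw [hrev, hpol]
    have heq1 : 1 / (4 * L) * (g2 - 2 * ip + ‖v k‖ ^ 2)
        = 1 / (4 * L) * g2 - 1 / (2 * L) * ip + 1 / (4 * L) * a k := by
      rw [ha]; field_simp; ring
    have heq2 : 1 / (4 * L) * a k = 1 / (8 * L) * a k + 1 / (8 * L) * a k := by
      field_simp; ring
    have hgnn : (0:ℝ) ≤ 1 / (4 * L) * g2 := by positivity
    rw [heq1, heq2]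
    linarith [hd]
  -- variance recursion bound
  have hvarb : ∀ k, e k ≤ 1 / (4 * q) * ∑ j ∈ Finset.Ico (q * (k / q)) k, a j := by
    intro k
    induction k with
    | zero =>
      have : v 0 = gradient f (x 0) := hinit 0 (Nat.zero_mod q)
      simp [he, this]
    | succ k ih =>
      by_cases hk : (k + 1) % q = 0
      · have : v (k+1) = gradient f (x (k+1)) := hinit (k+1) hk
        have hz : e (k+1) = 0 := by simp [he, this]
        rw [hz]
        exact mul_nonneg (by positivity) (Finset.sum_nonneg fun j _ => hanneg j)
      · have hrec := hvar (k+1) hk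
        have hsk : (k + 1) - 1 = k := rfl
        rw [hsk] at hrec
        have hd2 : ‖x (k+1) - x k‖ ^ 2 = η ^ 2 * a k := hdisp k
        have hdiv : (k + 1) / q = k / q := by
          have hnd : ¬ q ∣ (k + 1) := by
            intro hdvd
            exact hk ((Nat.dvd_iff_mod_eq_zero).mp hdvd)
          rw [Nat.succ_div, if_neg hnd, add_zero]
        have hle : q * (k / q) ≤ k := Nat.mul_div_le k q
        have hsum : ∑ j ∈ Finset.Ico (q * ((k+1) / q)) (k+1), a j
            = (∑ j ∈ Finset.Ico (q * (k / q)) k, a j) + a k := by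
          rw [hdiv, Finset.sum_Ico_succ_top hle]
        rw [hsum]
        have hcoef : L ^ 2 / q * (η ^ 2 * a k) = 1 / (4 * q) * a k := by
          rw [hη]
          field_simp
          ring
        calc e (k+1) ≤ L ^ 2 / q * ‖x (k+1) - x k‖ ^ 2 + e k := hrec
          _ = 1 / (4 * q) * a k + e k := by rw [hd2, hcoef]
          _ ≤ 1 / (4 * q) * a k + 1 / (4 * q) * ∑ j ∈ Finset.Ico (q * (k / q)) k, a j := by
              linarith [ih]
          _ = 1 / (4 * q) * ((∑ j ∈ Finset.Ico (q * (k / q)) k, a j) + a k) := by ring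
  -- total variance bound
  have hqR : (0:ℝ) < q := by exact_mod_cast hq
  have hE : ∑ k ∈ Finset.range K, e k ≤ 1 / 4 * ∑ k ∈ Finset.range K, a k := by
    calc ∑ k ∈ Finset.range K, e k
        ≤ ∑ k ∈ Finset.range K, 1 / (4 * q) * ∑ j ∈ Finset.Ico (q * (k / q)) k, a j :=
          Finset.sum_le_sum fun k _ => hvarb k
      _ = 1 / (4 * q) * ∑ k ∈ Finset.range K, ∑ j ∈ Finset.Ico (q * (k / q)) k, a j := by
          rw [Finset.mul_sum]
      _ ≤ 1 / (4 * q) * (q * ∑ k ∈ Finset.range K, a k) := by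
          apply mul_le_mul_of_nonneg_left (sum_boole_mul_le hq a hanneg) (by positivity)
      _ = 1 / 4 * ∑ k ∈ Finset.range K, a k := by
          field_simp
  -- telescoping
  have htel : ∑ k ∈ Finset.range K, (f (x k) - f (x (k+1))) = f (x 0) - f (x K) :=
    Finset.sum_range_sub' (fun k => f (x k)) K
  have hSstep : 1 / (8 * L) * ∑ k ∈ Finset.range K, a k
      ≤ (f (x 0) - f (x K)) + 1 / (4 * L) * ∑ k ∈ Finset.range K, e k := by
    rw [← htel, Finset.mul_sum, Finset.mul_sum, ← Finset.sum_add_distrib]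
    exact Finset.sum_le_sum fun k _ => hstep k
  have hfK : fstar ≤ f (x K) := hlb (x K)
  set S := ∑ k ∈ Finset.range K, a k with hS
  have hSnn : 0 ≤ S := Finset.sum_nonneg fun k _ => hanneg k
  have hEnn : 1 / (4 * L) * ∑ k ∈ Finset.range K, e k ≤ 1 / (4 * L) * (1 / 4 * S) := by
    apply mul_le_mul_of_nonneg_left hE (by positivity)
  have key : 1 / (8 * L) * S ≤ (f (x 0) - fstar) + 1 / (16 * L) * S := by
    have : 1 / (4 * L) * (1 / 4 * S) = 1 / (16 * L) * S := by
      field_simp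
      ring
    linarith [hSstep, hEnn, hfK, this.le]
  have : 1 / (16 * L) * S ≤ f (x 0) - fstar := by
    have h : 1 / (8 * L) * S - 1 / (16 * L) * S = 1 / (16 * L) * S := by
      field_simp; ring
    linarith
  have h16 : (0:ℝ) < 16 * L := by linarith
  calc S = 16 * L * (1 / (16 * L) * S) := by field_simp
    _ ≤ 16 * L * (f (x 0) - fstar) := by
        apply mul_le_mul_of_nonneg_left this (by positivity)
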